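/- Let m ≥ 2 and k ≥ (m-1)/2. Then every nontrivial coset of RM(k,m) in F₂^{2^m} contains strictly fewer balanced words than RM(k,m) itself. -/

import Mathlib

/-- Weight of a Boolean function: number of inputs mapped to 1. -/
def wtF {m : ℕ} (f : (Fin m → ZMod 2) → ZMod 2) : ℕ :=
  (Finset.univ.filter fun x => f x = 1).card

/-- The Reed–Muller code RM(r,m): the span of the monomial functions of degree ≤ r,
i.e. truth tables of Boolean functions in m variables of degree at most r. -/
def RM (r m : ℕ) : Submodule (ZMod 2) ((Fin m → ZMod 2) → ZMod 2) :=
  Submodule.span (ZMod 2)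
    {f | ∃ S : Finset (Fin m), S.card ≤ r ∧ f = fun x => ∏ i ∈ S, x i}

/-!
Let `D = RM(m-k-1, m)`, whose dual code is `C = RM(k, m)`. For any set `B` of words,
Poisson summation over `D` gives
`|D| · #{v ∈ B | v + b ∈ C} = ∑_{u ∈ D} (-1)^(u·b) T(u)` with `T(u) = ∑_{v ∈ B} (-1)^(u·v)`.
Since `2(m-k-1) < m`, the code `D` is self-orthogonal and doubly even. For `B` the balanced words,
`T(u)` is the Krawtchouk value `K_{n/2}(wt u)`, and the symmetry
`C(n, j) K_{n/2}(j) = C(n, n/2) K_j(n/2) = C(n, n/2) (-1)^(j/2) C(n/2, j/2)` (`j` even) shows that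
it is positive when `4 ∣ j`. Hence the sum is largest for `b = 0`, and strictly smaller when
`b ∉ C`, because then some `u ∈ D` has `u·b = 1`.
-/

open Finset Matrix Polynomial

namespace ReedMuller

lemma eq_zero_or_eq_one : ∀ z : ZMod 2, z = 0 ∨ z = 1 := by decide

lemma eq_one_of_ne_zero : ∀ {z : ZMod 2}, z ≠ 0 → z = 1 := by decide

def χ (z : ZMod 2) : ℤ := (-1) ^ z.val

lemma χ_zero : χ 0 = 1 := rfl

lemma χ_one : χ 1 = -1 := rfl

lemma χ_add : ∀ y z : ZMod 2, χ (y + z) = χ y * χ z := by decide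

lemma χ_le_one : ∀ z : ZMod 2, χ z ≤ 1 := by decide

lemma χ_natCast (c : ℕ) : χ c = (-1) ^ c := by
  rw [χ, ZMod.val_natCast, ← neg_one_pow_eq_pow_mod_two]

lemma natCast_two_pow_eq_zero {e : ℕ} (he : e ≠ 0) : ((2 ^ e : ℕ) : ZMod 2) = 0 := by
  rw [Nat.cast_pow, show ((2 : ℕ) : ZMod 2) = 0 from rfl, zero_pow he]

lemma coeff_one_sub_X_pow (h t : ℕ) :
    ((1 - X : ℤ[X]) ^ h).coeff t = (-1) ^ t * (h.choose t : ℤ) := by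
  have hexp : (1 - X : ℤ[X]) ^ h
      = ∑ i ∈ range (h + 1), C ((-1) ^ i * (h.choose i : ℤ)) * X ^ i := by
    rw [sub_eq_add_neg, add_comm, add_pow]
    refine sum_congr rfl fun i _ => ?_
    rw [one_pow, mul_one, neg_pow, map_mul, map_pow, map_neg, map_one, map_natCast]
    ring
  simp_rw [hexp, finsetSum_coeff, coeff_C_mul_X_pow]
  rw [sum_ite_eq]
  split_ifs with ht
  · rfl
  · rw [mem_range, not_lt] at ht
    rw [Nat.choose_eq_zero_of_lt (by omega), Nat.cast_zero, mul_zero]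

lemma coeff_one_sub_X_pow_mul_one_add_X_pow (h t : ℕ) :
    ((1 - X) ^ h * (1 + X) ^ h : ℤ[X]).coeff (2 * t) = (-1) ^ t * (h.choose t : ℤ) := by
  have hexpand : ((1 - X) ^ h * (1 + X) ^ h : ℤ[X]) = expand ℤ 2 ((1 - X) ^ h) := by
    rw [← mul_pow, map_pow, map_sub, map_one, expand_X]
    ring
  rw [hexpand, coeff_expand two_pos, if_pos (dvd_mul_right 2 t),
    Nat.mul_div_cancel_left t two_pos, coeff_one_sub_X_pow]

lemma prod_ite_mem_neg_X {ι : Type*} [DecidableEq ι] (s t : Finset ι) :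
    ∏ i ∈ t, (if i ∈ s then -X else X : ℤ[X]) = C ((-1) ^ #(s ∩ t)) * X ^ #t := by
  have hfactor : ∀ i ∈ t,
      (if i ∈ s then -X else X : ℤ[X]) = (if i ∈ s then C (-1) else 1) * X := by
    intro i _
    split_ifs <;> simp
  rw [prod_congr rfl hfactor, prod_mul_distrib, prod_ite_mem, prod_const, prod_const,
    inter_comm, C_pow]

section BooleanVectors

variable {ι : Type*} [Fintype ι]

def ones (f : ι → ZMod 2) : Finset ι := univ.filter fun x => f x = 1

lemma sum_eq_card_ones (u : ι → ZMod 2) : ∑ x, u x = #(ones u) := by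
  rw [ones, natCast_card_filter]
  refine sum_congr rfl fun x _ => ?_
  generalize u x = z
  revert z
  decide

lemma dotProduct_eq_zero_of_mem_span {R : Type*} [CommRing R] {s t : Set (ι → R)}
    (h : ∀ u ∈ s, ∀ v ∈ t, u ⬝ᵥ v = 0) {u v : ι → R} (hu : u ∈ Submodule.span R s)
    (hv : v ∈ Submodule.span R t) : u ⬝ᵥ v = 0 := by
  induction hu using Submodule.span_induction with
  | mem u hu =>
    induction hv using Submodule.span_induction with
    | mem v hv => exact h u hu v hv
    | zero => exact dotProduct_zero u
    | add _ _ _ _ h₁ h₂ => rw [dotProduct_add, h₁, h₂, add_zero]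
    | smul c _ _ h₁ => rw [dotProduct_smul, h₁, smul_zero]
  | zero => exact zero_dotProduct v
  | add _ _ _ _ h₁ h₂ => rw [add_dotProduct, h₁, h₂, add_zero]
  | smul c _ _ h₁ => rw [smul_dotProduct, h₁, smul_zero]

section DualCode

variable {C D : Submodule (ZMod 2) (ι → ZMod 2)} [Fintype D]

lemma sum_χ_dotProduct_of_dotProduct_eq_one {u₀ w : ι → ZMod 2} (hu₀ : u₀ ∈ D)
    (hw : u₀ ⬝ᵥ w = 1) : ∑ u : D, χ ((u : ι → ZMod 2) ⬝ᵥ w) = 0 := by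
  have hflip := Fintype.sum_equiv (Equiv.addRight (⟨u₀, hu₀⟩ : D))
    (fun u => χ ((u : ι → ZMod 2) ⬝ᵥ w)) (fun u => -χ ((u : ι → ZMod 2) ⬝ᵥ w))
    (fun u => by simp [add_dotProduct, hw, χ_add, χ_one])
  rw [sum_neg_distrib] at hflip
  linarith

variable [DecidablePred (· ∈ C)]

lemma sum_χ_dotProduct (hC : ∀ w, w ∈ C ↔ ∀ u ∈ D, u ⬝ᵥ w = 0) (w : ι → ZMod 2) :
    ∑ u : D, χ ((u : ι → ZMod 2) ⬝ᵥ w) = if w ∈ C then (Fintype.card D : ℤ) else 0 := by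
  split_ifs with hw
  · simp [(hC w).1 hw _ (Subtype.mem _), χ]
  · obtain ⟨u₀, hu₀, hne⟩ : ∃ u₀ ∈ D, u₀ ⬝ᵥ w ≠ 0 := by simpa [hC w] using hw
    exact sum_χ_dotProduct_of_dotProduct_eq_one hu₀ (eq_one_of_ne_zero hne)

lemma sum_χ_mul_sum_χ (hC : ∀ w, w ∈ C ↔ ∀ u ∈ D, u ⬝ᵥ w = 0)
    (B : Finset (ι → ZMod 2)) (b : ι → ZMod 2) :
    ∑ u : D, χ ((u : ι → ZMod 2) ⬝ᵥ b) * ∑ v ∈ B, χ ((u : ι → ZMod 2) ⬝ᵥ v)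
      = Fintype.card D * #{v ∈ B | v + b ∈ C} := by
  simp_rw [mul_sum, ← χ_add, ← dotProduct_add]
  rw [sum_comm]
  simp_rw [add_comm b, sum_χ_dotProduct hC, sum_ite, sum_const_zero, add_zero, sum_const,
    nsmul_eq_mul, mul_comm]

theorem card_filter_add_mem_lt (hC : ∀ w, w ∈ C ↔ ∀ u ∈ D, u ⬝ᵥ w = 0)
    (B : Finset (ι → ZMod 2)) (hB : ∀ u ∈ D, 0 < ∑ v ∈ B, χ (u ⬝ᵥ v))
    {a : ι → ZMod 2} (ha : a ∉ C) : #{v ∈ B | v + a ∈ C} < #{v ∈ B | v ∈ C} := by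
  obtain ⟨u₀, hu₀, hne⟩ : ∃ u₀ ∈ D, u₀ ⬝ᵥ a ≠ 0 := by simpa [hC a] using ha
  have hlt : ∑ u : D, χ ((u : ι → ZMod 2) ⬝ᵥ a) * ∑ v ∈ B, χ ((u : ι → ZMod 2) ⬝ᵥ v)
      < ∑ u : D, χ ((u : ι → ZMod 2) ⬝ᵥ 0) * ∑ v ∈ B, χ ((u : ι → ZMod 2) ⬝ᵥ v) := by
    refine sum_lt_sum (fun u _ => ?_) ⟨⟨u₀, hu₀⟩, mem_univ _, ?_⟩
    · rw [dotProduct_zero, χ_zero, one_mul]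
      exact mul_le_of_le_one_left (hB u u.2).le (χ_le_one _)
    · rw [dotProduct_zero, eq_one_of_ne_zero hne, χ_one, χ_zero]
      linarith [hB u₀ hu₀]
  rw [sum_χ_mul_sum_χ hC, sum_χ_mul_sum_χ hC] at hlt
  simpa using lt_of_mul_lt_mul_left hlt (Nat.cast_nonneg _)

end DualCode

variable [DecidableEq ι]

lemma ones_mul (u v : ι → ZMod 2) : ones (u * v) = ones u ∩ ones v := by
  ext x
  simp only [ones, mem_filter_univ, mem_inter, Pi.mul_apply]
  generalize u x = y
  generalize v x = z
  revert y z
  decide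

lemma dotProduct_eq_card_inter (u v : ι → ZMod 2) : u ⬝ᵥ v = #(ones u ∩ ones v) := by
  rw [← ones_mul, ← sum_eq_card_ones]
  rfl

lemma card_ones_add (u v : ι → ZMod 2) :
    #(ones (u + v)) + 2 * #(ones u ∩ ones v) = #(ones u) + #(ones v) := by
  have hsupp : ones (u + v) = (ones u ∪ ones v) \ (ones u ∩ ones v) := by
    ext x
    simp only [ones, mem_filter_univ, mem_sdiff, mem_union, mem_inter, Pi.add_apply]
    generalize u x = y
    generalize v x = z
    revert y z
    decide
  rw [hsupp, card_sdiff_of_subset inter_subset_union, ← card_union_add_card_inter]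
  have := card_le_card (inter_subset_union (s := ones u) (t := ones v))
  omega

lemma four_dvd_card_ones_of_mem_span {s : Set (ι → ZMod 2)} (h4 : ∀ u ∈ s, 4 ∣ #(ones u))
    (horth : ∀ u ∈ s, ∀ v ∈ s, u ⬝ᵥ v = 0) {u : ι → ZMod 2}
    (hu : u ∈ Submodule.span (ZMod 2) s) : 4 ∣ #(ones u) := by
  induction hu using Submodule.span_induction with
  | mem u hu => exact h4 u hu
  | zero => simp [ones]
  | add u v hu hv ihu ihv =>
    have h2 : 2 ∣ #(ones u ∩ ones v) := by
      rw [← ZMod.natCast_eq_zero_iff, ← dotProduct_eq_card_inter]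
      exact dotProduct_eq_zero_of_mem_span horth hu hv
    have := card_ones_add u v
    omega
  | smul c u _ ih =>
    rcases eq_zero_or_eq_one c with rfl | rfl
    · simp [ones]
    · rwa [one_smul]

def onesEquiv : (ι → ZMod 2) ≃ Finset ι where
  toFun := ones
  invFun W x := if x ∈ W then 1 else 0
  left_inv v := by
    funext x
    rcases eq_zero_or_eq_one (v x) with h | h <;> simp [ones, h]
  right_inv W := by
    ext x
    simp [ones]

lemma sum_powersetCard_neg_one_pow_card_inter (s : Finset ι) (w : ℕ) :
    ∑ v ∈ powersetCard w univ, (-1 : ℤ) ^ #(s ∩ v)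
      = ((1 - X) ^ #s * (1 + X) ^ (Fintype.card ι - #s) : ℤ[X]).coeff w := by
  have hprod : ∏ i, (1 + if i ∈ s then -X else X : ℤ[X])
      = (1 - X) ^ #s * (1 + X) ^ (Fintype.card ι - #s) := by
    have hfactor : ∀ i,
        (1 + if i ∈ s then -X else X : ℤ[X]) = if i ∈ s then 1 - X else 1 + X := by
      intro i
      split_ifs <;> ring
    simp_rw [hfactor, prod_ite, prod_const, filter_mem_eq_inter, univ_inter]
    rw [filter_notMem_eq_sdiff, card_univ_sdiff]
  rw [← hprod, prod_one_add, finsetSum_coeff]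
  simp_rw [prod_ite_mem_neg_X, coeff_C_mul_X_pow]
  rw [← sum_filter, powersetCard_eq_filter]
  simp_rw [eq_comm]

/-- Both sides count `∑ (-1) ^ #(u ∩ v)` over subsets `u, v` of `Fin n` of sizes `j` and `h`. -/
lemma choose_mul_coeff_comm (n j h : ℕ) :
    (n.choose j : ℤ) * ((1 - X) ^ j * (1 + X) ^ (n - j) : ℤ[X]).coeff h
      = n.choose h * ((1 - X) ^ h * (1 + X) ^ (n - h) : ℤ[X]).coeff j := by
  have hcount : ∀ j h, ∑ u ∈ powersetCard j (univ : Finset (Fin n)),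
      ∑ v ∈ powersetCard h univ, (-1 : ℤ) ^ #(u ∩ v)
        = n.choose j * ((1 - X) ^ j * (1 + X) ^ (n - j) : ℤ[X]).coeff h := by
    intro j h
    have hinner : ∀ u ∈ powersetCard j (univ : Finset (Fin n)),
        ∑ v ∈ powersetCard h univ, (-1 : ℤ) ^ #(u ∩ v)
          = ((1 - X) ^ j * (1 + X) ^ (n - j) : ℤ[X]).coeff h := by
      intro u hu
      rw [sum_powersetCard_neg_one_pow_card_inter, mem_powersetCard_univ.1 hu,
        Fintype.card_fin]
    rw [sum_congr rfl hinner, sum_const, card_powersetCard, card_univ, Fintype.card_fin,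
      nsmul_eq_mul]
  rw [← hcount, ← hcount, sum_comm]
  simp_rw [inter_comm]

lemma sum_powersetCard_neg_one_pow_card_inter_pos {h : ℕ} (hcard : Fintype.card ι = 2 * h)
    {s : Finset ι} (hs : 4 ∣ #s) : 0 < ∑ v ∈ powersetCard h univ, (-1 : ℤ) ^ #(s ∩ v) := by
  obtain ⟨t, ht⟩ : ∃ t, #s = 2 * (2 * t) := by
    obtain ⟨t, ht⟩ := hs
    exact ⟨t, by omega⟩
  have hsle : #s ≤ 2 * h := hcard ▸ card_le_univ s
  have hsymm := choose_mul_coeff_comm (2 * h) #s h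
  rw [show 2 * h - h = h by omega, ht, coeff_one_sub_X_pow_mul_one_add_X_pow,
    (even_two_mul t).neg_one_pow, one_mul] at hsymm
  rw [sum_powersetCard_neg_one_pow_card_inter, hcard, ht]
  have h₁ : (0 : ℤ) < (2 * h).choose (2 * (2 * t)) := by exact_mod_cast Nat.choose_pos (by omega)
  have h₂ : (0 : ℤ) < (2 * h).choose h := by exact_mod_cast Nat.choose_pos (by omega)
  have h₃ : (0 : ℤ) < h.choose (2 * t) := by exact_mod_cast Nat.choose_pos (by omega)
  exact (mul_pos_iff_of_pos_left h₁).1 (hsymm ▸ mul_pos h₂ h₃)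

lemma sum_χ_dotProduct_balanced_pos {h : ℕ} (hcard : Fintype.card ι = 2 * h)
    {u : ι → ZMod 2} (hu : 4 ∣ #(ones u)) :
    0 < ∑ v ∈ univ.filter (fun v => #(ones v) = h), χ (u ⬝ᵥ v) := by
  rw [sum_equiv onesEquiv (t := powersetCard h univ) (g := fun W => (-1) ^ #(ones u ∩ W))]
  · exact sum_powersetCard_neg_one_pow_card_inter_pos hcard hu
  · simp [onesEquiv]
  · intro v _
    simp [onesEquiv, dotProduct_eq_card_inter, χ_natCast]

def mono (S : Finset ι) : (ι → ZMod 2) → ZMod 2 := fun x => ∏ i ∈ S, x i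

lemma mem_ones_mono {S : Finset ι} {x : ι → ZMod 2} :
    x ∈ ones (mono S) ↔ ∀ i ∈ S, x i = 1 := by
  rw [ones, mem_filter_univ, mono]
  refine ⟨fun h i hi => ?_, prod_eq_one⟩
  by_contra hne
  rw [prod_eq_zero hi ((eq_zero_or_eq_one _).resolve_right hne)] at h
  exact zero_ne_one h

lemma card_ones_mono (S : Finset ι) : #(ones (mono S)) = 2 ^ (Fintype.card ι - #S) := by
  have hpi : ones (mono S) = Fintype.piFinset fun i => if i ∈ S then {1} else univ := by
    ext x
    rw [mem_ones_mono, Fintype.mem_piFinset]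
    refine forall_congr' fun i => ?_
    split_ifs with hi <;> simp [hi]
  rw [hpi, Fintype.card_piFinset]
  simp only [apply_ite card, card_singleton, card_univ, ZMod.card]
  rw [prod_ite, prod_const_one, one_mul, prod_const, filter_notMem_eq_sdiff, card_univ_sdiff]

lemma mono_mul_mono (S T : Finset ι) : mono S * mono T = mono (S ∪ T) := by
  apply onesEquiv.injective
  ext x
  simp only [onesEquiv, Equiv.coe_fn_mk, ones_mul, mem_inter, mem_ones_mono, forall_mem_union]

lemma dotProduct_mono_mono (S T : Finset ι) :
    mono S ⬝ᵥ mono T = ((2 ^ (Fintype.card ι - #(S ∪ T)) : ℕ) : ZMod 2) := by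
  rw [dotProduct_eq_card_inter, ← ones_mul, mono_mul_mono, card_ones_mono]

lemma mem_span_range_mono (a : (ι → ZMod 2) → ZMod 2) :
    a ∈ Submodule.span (ZMod 2) (Set.range mono) := by
  -- `δ y` is the indicator function of `y`
  let δ (y : ι → ZMod 2) : (ι → ZMod 2) → ZMod 2 := fun x => ∏ i, (x i + (1 + y i))
  have hδ_apply : ∀ x y, δ y x = if x = y then 1 else 0 := by
    intro x y
    split_ifs with hxy
    · subst hxy
      exact prod_eq_one fun i _ => by generalize x i = z; revert z; decide
    · obtain ⟨i, hi⟩ := Function.ne_iff.1 hxy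
      refine prod_eq_zero (mem_univ i) ?_
      revert hi
      generalize x i = z
      generalize y i = w
      revert z w
      decide
  have hδ : ∀ y, δ y = ∑ t ∈ univ.powerset, (∏ i ∈ univ \ t, (1 + y i)) • mono t := by
    intro y
    funext x
    simp only [δ]
    rw [prod_add, Finset.sum_apply]
    simp [mono, mul_comm]
  have ha : a = ∑ y, a y • δ y := by
    funext x
    simp [Finset.sum_apply, hδ_apply]
  rw [ha]
  refine Submodule.sum_mem _ fun y _ => Submodule.smul_mem _ _ ?_
  rw [hδ]
  exact Submodule.sum_mem _ fun t _ => Submodule.smul_mem _ _ (Submodule.subset_span ⟨t, rfl⟩)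

end BooleanVectors

section RM

variable {m : ℕ}

lemma mono_mem_RM {S : Finset (Fin m)} {r : ℕ} (hS : #S ≤ r) : mono S ∈ RM r m :=
  Submodule.subset_span ⟨S, hS, rfl⟩

lemma dotProduct_eq_zero_of_mem_RM {r r' : ℕ} (h : r + r' < m)
    {u v : (Fin m → ZMod 2) → ZMod 2} (hu : u ∈ RM r m) (hv : v ∈ RM r' m) : u ⬝ᵥ v = 0 := by
  refine dotProduct_eq_zero_of_mem_span ?_ hu hv
  rintro _ ⟨S, hS, rfl⟩ _ ⟨T, hT, rfl⟩
  refine (dotProduct_mono_mono S T).trans (natCast_two_pow_eq_zero ?_)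
  have := card_union_le S T
  rw [Fintype.card_fin]
  omega

lemma four_dvd_wtF_of_mem_RM {r : ℕ} (hm : 2 ≤ m) (hr : 2 * r < m)
    {u : (Fin m → ZMod 2) → ZMod 2} (hu : u ∈ RM r m) : 4 ∣ wtF u := by
  refine four_dvd_card_ones_of_mem_span ?_
    (fun u hu v hv => dotProduct_eq_zero_of_mem_RM (by omega) (Submodule.subset_span hu)
      (Submodule.subset_span hv)) hu
  rintro _ ⟨S, hS, rfl⟩
  rw [show (fun x => ∏ i ∈ S, x i) = mono S from rfl, card_ones_mono, Fintype.card_fin,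
    show m - #S = 2 + (m - #S - 2) by omega, pow_add]
  exact dvd_mul_right _ _

lemma exists_dotProduct_mono_eq_one_of_notMem_RM {k : ℕ} {a : (Fin m → ZMod 2) → ZMod 2}
    (ha : a ∉ RM k m) : ∃ T : Finset (Fin m), #T + k < m ∧ mono T ⬝ᵥ a = 1 := by
  obtain ⟨c, rfl⟩ := (Submodule.mem_span_range_iff_exists_fun _).1 (mem_span_range_mono a)
  obtain ⟨S₀, hS₀, hkS₀⟩ : ∃ S, c S ≠ 0 ∧ k < #S := by
    by_contra! h
    refine ha (Submodule.sum_mem _ fun S _ => ?_)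
    by_cases hS : c S = 0
    · rw [hS, zero_smul]
      exact Submodule.zero_mem _
    · exact Submodule.smul_mem _ _ (mono_mem_RM (h S hS))
  -- For `S` of maximal size with `c S ≠ 0`, pairing with `mono Sᶜ` reads off `c S` alone.
  obtain ⟨S, hS, hSmax⟩ := exists_max_image (univ.filter (c · ≠ 0)) card ⟨S₀, by simpa⟩
  rw [mem_filter_univ] at hS
  have hSm : #S ≤ m := by simpa using card_le_univ S
  have hkS : k < #S := hkS₀.trans_le (hSmax S₀ (by simpa))
  refine ⟨Sᶜ, by rw [card_compl, Fintype.card_fin]; omega, ?_⟩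
  rw [dotProduct_sum, sum_eq_single S (fun S' _ hS'S => ?_) (by simp)]
  · rw [dotProduct_smul, dotProduct_mono_mono, union_comm, union_compl, card_univ, Nat.sub_self,
      pow_zero, Nat.cast_one, smul_eq_mul, mul_one, eq_one_of_ne_zero hS]
  by_cases hS' : c S' = 0
  · rw [hS', zero_smul, dotProduct_zero]
  rw [dotProduct_smul, dotProduct_mono_mono, natCast_two_pow_eq_zero, smul_zero]
  intro hfull
  have hcover : Sᶜ ∪ S' = univ :=
    eq_univ_of_card _ (by have := card_le_univ (Sᶜ ∪ S'); omega)
  have hSS' : S ⊆ S' := fun x hx =>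
    (mem_union.1 (hcover ▸ mem_univ x)).resolve_left (notMem_compl.2 hx)
  exact hS'S (eq_of_subset_of_card_le hSS' (hSmax S' (by simpa))).symm

lemma mem_RM_iff_forall_dotProduct_eq_zero {k : ℕ} (hk : k < m)
    (w : (Fin m → ZMod 2) → ZMod 2) : w ∈ RM k m ↔ ∀ u ∈ RM (m - k - 1) m, u ⬝ᵥ w = 0 := by
  refine ⟨fun hw u hu => dotProduct_eq_zero_of_mem_RM (by omega) hu hw, fun h => ?_⟩
  by_contra hw
  obtain ⟨T, hT, hTw⟩ := exists_dotProduct_mono_eq_one_of_notMem_RM hw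
  exact one_ne_zero (hTw ▸ h _ (mono_mem_RM (by omega)))

end RM

end ReedMuller

open ReedMuller in
theorem RM_coset_fewer_balanced (m k : ℕ) (hm : 2 ≤ m) (hk : m - 1 ≤ 2 * k)
    (a : (Fin m → ZMod 2) → ZMod 2) (ha : a ∉ RM k m) :
    {v | (∃ c ∈ RM k m, v = c + a) ∧ wtF v = 2 ^ (m - 1)}.ncard <
      {v | v ∈ RM k m ∧ wtF v = 2 ^ (m - 1)}.ncard := by
  classical
  have hkm : k < m := by
    obtain ⟨T, hT, -⟩ := exists_dotProduct_mono_eq_one_of_notMem_RM ha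
    omega
  have hcard : Fintype.card (Fin m → ZMod 2) = 2 * 2 ^ (m - 1) := by
    rw [← pow_succ', Nat.sub_add_cancel (by omega), Fintype.card_fun, ZMod.card, Fintype.card_fin]
  have hbal := card_filter_add_mem_lt (mem_RM_iff_forall_dotProduct_eq_zero hkm) _
    (fun u hu => sum_χ_dotProduct_balanced_pos hcard (four_dvd_wtF_of_mem_RM hm (by omega) hu)) ha
  have hcoset : ∀ v, (∃ c ∈ RM k m, v = c + a) ↔ v + a ∈ RM k m := fun v =>
    ⟨by rintro ⟨c, hc, rfl⟩; rwa [add_assoc, CharTwo.add_self_eq_zero, add_zero],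
      fun hv => ⟨v + a, hv, by rw [add_assoc, CharTwo.add_self_eq_zero, add_zero]⟩⟩
  convert hbal using 1 <;> rw [← Set.ncard_coe_finset] <;> congr 1 <;> ext v <;>
    rw [Set.mem_ofPred_eq, mem_coe, mem_filter, mem_filter_univ, and_comm]
  · rw [hcoset]
    rfl
  · rfl
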